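/- A connected graph G on n ≥ 3 vertices satisfies α'₁(G) = 2 if and only if G is isomorphic to one of: C₃, C₄, the diamond D₄ = K₄ minus an edge, K₄, the graph U_{1,3} obtained from the star K_{1,3} by adding one edge between two leaves, the path P₄, or the star K_{1,n-1}. -/

import Mathlib

open scoped Classical

/-- Two edges (as unordered pairs) share a vertex. -/
def ShareVertex {V : Type*} (e f : Sym2 V) : Prop := ∃ v, v ∈ e ∧ v ∈ f

/-- `M` is a 1-nearly edge independent set of `G`: a set of edges of `G` containing
exactly one pair of distinct edges sharing a common vertex. -/
def IsOneNearlyEdgeIndep {V : Type*} (G : SimpleGraph V) (M : Finset (Sym2 V)) : Prop :=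
  ↑M ⊆ G.edgeSet ∧
    (M.offDiag.filter fun p => ShareVertex p.1 p.2).card = 2

/-- The 1-nearly edge independence number `α'₁(G)`: maximum cardinality of a
1-nearly edge independent set, `0` if none exists. -/
noncomputable def edgeAlpha1 {V : Type*} (G : SimpleGraph V) : ℕ :=
  sSup {k | ∃ M : Finset (Sym2 V), IsOneNearlyEdgeIndep G M ∧ M.card = k}

/-- `I` is a 1-nearly vertex independent set of `G`: exactly one pair of distinct
vertices of `I` is adjacent in `G`. -/
def IsOneNearlyVertexIndep {V : Type*} (G : SimpleGraph V) (I : Finset V) : Prop :=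
  (I.offDiag.filter fun p => G.Adj p.1 p.2).card = 2

/-- The 1-nearly vertex independence number `α₁(G)`. -/
noncomputable def vertexAlpha1 {V : Type*} (G : SimpleGraph V) : ℕ :=
  sSup {k | ∃ I : Finset V, IsOneNearlyVertexIndep G I ∧ I.card = k}

/-- The star `K_{1,n-1}` on `Fin n` with center `0`. -/
def starGraph (n : ℕ) : SimpleGraph (Fin n) where
  Adj a b := a ≠ b ∧ (a.val = 0 ∨ b.val = 0)
  symm := ⟨fun a b ⟨h1, h2⟩ => ⟨h1.symm, h2.symm⟩⟩
  loopless := ⟨fun a h => h.1 rfl⟩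

/-- The diamond `D₄ = K₄ - e`. -/
def diamondGraph : SimpleGraph (Fin 4) :=
  (⊤ : SimpleGraph (Fin 4)).deleteEdges {s(0, 1)}

/-- `U_{1,3}`: the star `K_{1,3}` plus an edge between two leaves. -/
def U13 : SimpleGraph (Fin 4) :=
  SimpleGraph.fromEdgeSet {s(0, 1), s(0, 2), s(0, 3), s(1, 2)}

/-!
A 1-nearly edge independent set is a path `u - v - w` (a *cherry*) together with further edges
disjoint from it and from each other. Hence `α'₁(G) ≥ 2` iff `G` has a cherry, and `α'₁(G) ≥ 3`
iff some edge misses some cherry: `α'₁(G) = 2` iff `G` has a cherry and every edge meets every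
cherry. On at most four vertices the second condition is automatic, and the connected graphs on
three and four vertices are exactly the listed ones (on four vertices this is checked by running
through all 64 graphs on `Fin 4`). On five or more vertices, an outside vertex and its neighbour
show that no cherry extends to a path on four vertices or closes to a triangle, so every edge
passes through the middle vertex of a fixed cherry and `G` is a star.
-/

namespace Finset

theorem exists_notMem_of_card_lt {α : Type*} [Fintype α] {s : Finset α}
    (h : s.card < Fintype.card α) : ∃ a, a ∉ s := by
  simpa using exists_mem_notMem_of_card_lt_card (t := univ) (by rwa [card_univ])

variable {α : Type*} [DecidableEq α] {p : α × α → Prop} [DecidablePred p] {s : Finset α}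
  {a b : α}

theorem filter_offDiag_insert_of_forall_not (ha : a ∉ s)
    (hp : ∀ b ∈ s, ¬p (a, b) ∧ ¬p (b, a)) :
    (insert a s).offDiag.filter p = s.offDiag.filter p := by
  ext ⟨x, y⟩
  simp only [offDiag_insert ha, mem_filter, mem_union, mem_product, mem_singleton]
  constructor
  · rintro ⟨(h | ⟨rfl, hy⟩) | ⟨hx, rfl⟩, hxy⟩
    exacts [⟨h, hxy⟩, ((hp y hy).1 hxy).elim, ((hp x hx).2 hxy).elim]
  · exact fun ⟨h, hxy⟩ => ⟨Or.inl (Or.inl h), hxy⟩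

theorem card_filter_offDiag_pair (hab : a ≠ b) (h : p (a, b)) (h' : p (b, a)) :
    (({a, b} : Finset α).offDiag.filter p).card = 2 := by
  rw [filter_true_of_mem, offDiag_card, card_pair hab]
  rintro ⟨x, y⟩ hxy
  simp only [mem_offDiag, mem_insert, mem_singleton] at hxy
  obtain ⟨rfl | rfl, rfl | rfl, hxy⟩ := hxy <;> first | exact (hxy rfl).elim | assumption

theorem filter_offDiag_eq_pair_of_card_eq_two (hsymm : ∀ x y, p (x, y) → p (y, x))
    (hcard : (s.offDiag.filter p).card = 2) (hab : (a, b) ∈ s.offDiag.filter p) :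
    s.offDiag.filter p = {(a, b), (b, a)} := by
  simp only [mem_filter, mem_offDiag] at hab
  obtain ⟨⟨ha, hb, hne⟩, h⟩ := hab
  refine (eq_of_subset_of_card_le ?_ ?_).symm
  · simp only [insert_subset_iff, singleton_subset_iff, mem_filter, mem_offDiag]
    exact ⟨⟨⟨ha, hb, hne⟩, h⟩, ⟨hb, ha, hne.symm⟩, hsymm a b h⟩
  · rw [hcard, card_pair (by simp [hne])]

end Finset

theorem ShareVertex.symm {V : Type*} {e f : Sym2 V} (h : ShareVertex e f) : ShareVertex f e :=
  let ⟨v, he, hf⟩ := h; ⟨v, hf, he⟩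

namespace SimpleGraph

variable {V : Type*} (G : SimpleGraph V)

def IsCherry (u v w : V) : Prop := u ≠ w ∧ G.Adj u v ∧ G.Adj v w

def EdgesMeetCherries : Prop :=
  ∀ ⦃u v w x y : V⦄, G.IsCherry u v w → G.Adj x y →
    x = u ∨ x = v ∨ x = w ∨ y = u ∨ y = v ∨ y = w

variable {G} {u v w : V}

theorem IsCherry.symm (h : G.IsCherry u v w) : G.IsCherry w v u :=
  ⟨h.1.symm, h.2.2.symm, h.2.1.symm⟩

theorem IsCherry.isOneNearlyEdgeIndep (h : G.IsCherry u v w) :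
    IsOneNearlyEdgeIndep G {s(u, v), s(v, w)} := by
  obtain ⟨huw, huv, hvw⟩ := h
  refine ⟨by simp [Set.insert_subset_iff, huv, hvw], Finset.card_filter_offDiag_pair ?_ ?_ ?_⟩
  · simp [huv.ne, huw]
  · exact ⟨v, by simp, by simp⟩
  · exact ⟨v, by simp, by simp⟩

end SimpleGraph

section OneNearlyEdgeIndep

variable {V : Type*} {G : SimpleGraph V} {x y : V} {M : Finset (Sym2 V)}

theorem IsOneNearlyEdgeIndep.insert (hM : IsOneNearlyEdgeIndep G M) (hxy : G.Adj x y)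
    (hdisj : ∀ e ∈ M, x ∉ e ∧ y ∉ e) : IsOneNearlyEdgeIndep G (insert s(x, y) M) := by
  have hshare : ∀ e ∈ M, ¬ShareVertex s(x, y) e := by
    rintro e he ⟨t, ht, hte⟩
    obtain rfl | rfl := Sym2.mem_iff.mp ht
    exacts [(hdisj e he).1 hte, (hdisj e he).2 hte]
  refine ⟨by simp [Set.insert_subset_iff, hxy, hM.1], ?_⟩
  rw [Finset.filter_offDiag_insert_of_forall_not, hM.2]
  · exact fun he => hdisj _ he |>.1 (Sym2.mem_mk_left x y)
  · exact fun e he => ⟨hshare e he, fun h => hshare e he h.symm⟩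

theorem IsOneNearlyEdgeIndep.exists_isCherry (hM : IsOneNearlyEdgeIndep G M) :
    ∃ u v w, G.IsCherry u v w ∧ s(u, v) ∈ M ∧ s(v, w) ∈ M ∧
      ∀ e ∈ M, ShareVertex e s(u, v) ∨ ShareVertex e s(v, w) → e = s(u, v) ∨ e = s(v, w) := by
  obtain ⟨⟨e, f⟩, hef⟩ := Finset.card_pos.mp (hM.2 ▸ two_pos)
  have hpair :=
    Finset.filter_offDiag_eq_pair_of_card_eq_two (fun _ _ => ShareVertex.symm) hM.2 hef
  simp only [Finset.mem_filter, Finset.mem_offDiag] at hef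
  obtain ⟨⟨he, hf, hne⟩, v, hve, hvf⟩ := hef
  obtain ⟨u, rfl⟩ := Sym2.mem_iff_exists.mp hve
  obtain ⟨w, rfl⟩ := Sym2.mem_iff_exists.mp hvf
  rw [Sym2.eq_swap] at he hpair hne
  refine ⟨u, v, w, ⟨fun h => hne (by rw [h, Sym2.eq_swap]), hM.1 he, hM.1 hf⟩, he, hf, ?_⟩
  intro g hg hshare
  by_contra! hg'
  have hmem : (g, s(u, v)) ∈ M.offDiag.filter (fun p => ShareVertex p.1 p.2) ∨
      (g, s(v, w)) ∈ M.offDiag.filter (fun p => ShareVertex p.1 p.2) := by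
    simp only [Finset.mem_filter, Finset.mem_offDiag]
    tauto
  rw [hpair] at hmem
  simp [hg'.1, hg'.2] at hmem

theorem IsOneNearlyEdgeIndep.card_le_two (hG : G.EdgesMeetCherries)
    (hM : IsOneNearlyEdgeIndep G M) : M.card ≤ 2 := by
  obtain ⟨u, v, w, hc, -, -, hpair⟩ := hM.exists_isCherry
  by_contra! h3
  obtain ⟨e, he, hne⟩ :=
    Finset.exists_mem_notMem_of_card_lt_card (Finset.card_le_two.trans_lt h3)
  induction e using Sym2.ind with | h x y => ?_
  have hshare : ShareVertex s(x, y) s(u, v) ∨ ShareVertex s(x, y) s(v, w) := by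
    rcases hG hc (hM.1 he) with rfl | rfl | rfl | rfl | rfl | rfl <;> simp [ShareVertex]
  simp only [Finset.mem_insert, Finset.mem_singleton] at hne
  exact hne (hpair _ he hshare)

theorem edgeAlpha1_eq_two_iff [Fintype V] :
    edgeAlpha1 G = 2 ↔ (∃ u v w, G.IsCherry u v w) ∧ G.EdgesMeetCherries := by
  set S := {k | ∃ M : Finset (Sym2 V), IsOneNearlyEdgeIndep G M ∧ M.card = k}
  have hS : BddAbove S := ⟨Fintype.card (Sym2 V), by rintro _ ⟨M, -, rfl⟩; exact M.card_le_univ⟩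
  have hsup : edgeAlpha1 G = sSup S := rfl
  constructor
  · intro h
    obtain ⟨_, M, hM, -⟩ : S.Nonempty := by
      refine Set.nonempty_iff_ne_empty.mpr fun hS₀ => ?_
      rw [hsup, hS₀, csSup_empty] at h
      exact absurd h (by decide)
    obtain ⟨u, v, w, hc, -⟩ := hM.exists_isCherry
    refine ⟨⟨u, v, w, hc⟩, fun u v w x y hc hxy => ?_⟩
    by_contra! hfar
    have h3 : 3 ∈ S := by
      refine ⟨_, hc.isOneNearlyEdgeIndep.insert hxy (by simp [hfar]), ?_⟩
      rw [Finset.card_insert_of_notMem (by simp [hfar]), Finset.card_pair]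
      simp [hc.2.1.ne, hc.1]
    have := le_csSup hS h3
    omega
  · rintro ⟨⟨u, v, w, hc⟩, hG⟩
    refine IsGreatest.csSup_eq ⟨⟨_, hc.isOneNearlyEdgeIndep, Finset.card_pair ?_⟩, ?_⟩
    · simp [hc.2.1.ne, hc.1]
    · rintro _ ⟨M, hM, rfl⟩
      exact hM.card_le_two hG

end OneNearlyEdgeIndep

namespace SimpleGraph

variable {V : Type*} {G : SimpleGraph V}

theorem edgesMeetCherries_of_card_le_four [Fintype V] (h : Fintype.card V ≤ 4) :
    G.EdgesMeetCherries := by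
  rintro u v w x y ⟨huw, huv, hvw⟩ hxy
  by_contra! hne
  have hnodup : [u, v, w, x, y].Nodup := by
    simp only [List.nodup_cons, List.mem_cons, List.not_mem_nil, or_false, List.nodup_nil]
    have := huv.ne; have := hvw.ne; have := hxy.ne
    grind
  have := (List.toFinset_card_of_nodup hnodup).symm.trans_le (Finset.card_le_univ _)
  simp at this
  omega

theorem edgesMeetCherries_starGraph (r : V) : (starGraph r).EdgesMeetCherries := by
  rintro u v w x y ⟨huw, huv, hvw⟩ hxy
  simp only [starGraph_adj] at huv hvw hxy
  grind

theorem Connected.exists_isCherry [Fintype V] (hG : G.Connected) (h3 : 3 ≤ Fintype.card V) :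
    ∃ u v w, G.IsCherry u v w := by
  have : Nontrivial V := Fintype.one_lt_card_iff_nontrivial.mp (by omega)
  obtain ⟨a⟩ := hG.nonempty
  obtain ⟨b, hab⟩ := hG.preconnected.exists_adj_of_nontrivial a
  obtain ⟨c, hc⟩ :=
    Finset.exists_notMem_of_card_lt (s := {a, b}) (Finset.card_le_two.trans_lt h3)
  simp only [Finset.mem_insert, Finset.mem_singleton, not_or] at hc
  obtain ⟨p, hp⟩ := (hG c a).exists_isPath
  cases p with
  | nil => exact (hc.1 rfl).elim
  | cons hcx q =>
    cases q with
    | nil => exact ⟨c, a, b, hc.2, hcx, hab⟩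
    | cons hxy q =>
      simp only [Walk.cons_isPath_iff, Walk.support_cons, List.mem_cons, not_or] at hp
      exact ⟨c, _, _, fun h => hp.2.2 (h ▸ q.start_mem_support), hcx, hxy⟩

section FiveVertices

variable [Fintype V] {a b c d : V}

theorem EdgesMeetCherries.not_adj_of_isCherry (hG : G.EdgesMeetCherries) (hconn : G.Connected)
    (h5 : 5 ≤ Fintype.card V) (habc : G.IsCherry a b c) (hda : d ≠ a) (hdb : d ≠ b) :
    ¬G.Adj c d := by
  intro hcd
  obtain ⟨z, hz⟩ :=
    Finset.exists_notMem_of_card_lt (s := {a, b, c, d}) (Finset.card_le_four.trans_lt h5)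
  simp only [Finset.mem_insert, Finset.mem_singleton, not_or] at hz
  have : Nontrivial V := Fintype.one_lt_card_iff_nontrivial.mp (by omega)
  obtain ⟨t, hzt⟩ := hconn.preconnected.exists_adj_of_nontrivial z
  have := habc.2.1.ne; have := habc.2.2.ne; have := hcd.ne; have := habc.1
  have h₁ := hG habc hzt
  have h₂ := hG ⟨hdb.symm, habc.2.2, hcd⟩ hzt
  -- `z t` meets the cherries `a b c` and `b c d`, so `t` is `b` or `c`;
  -- then the cherry `z b a` misses the edge `c d`, resp. `z c d` misses `a b`.
  obtain rfl | rfl : t = b ∨ t = c := by grind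
  · have := hG ⟨hz.1, hzt, habc.2.1.symm⟩ hcd
    grind
  · have := hG ⟨hz.2.2.2, hzt, hcd⟩ habc.2.1
    grind

theorem EdgesMeetCherries.eq_of_adj_of_isCherry (hG : G.EdgesMeetCherries)
    (hconn : G.Connected) (h5 : 5 ≤ Fintype.card V) (habc : G.IsCherry a b c)
    (hcd : G.Adj c d) : d = b := by
  by_contra hdb
  by_cases hda : d = a
  · -- `a b c` is a triangle; the edge `z t` from a vertex outside it extends it to a path
    -- on four vertices.
    subst hda
    obtain ⟨z, hz⟩ := Finset.exists_notMem_of_card_lt (s := {d, b, c})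
      (Finset.card_le_three.trans_lt (by omega))
    simp only [Finset.mem_insert, Finset.mem_singleton, not_or] at hz
    have : Nontrivial V := Fintype.one_lt_card_iff_nontrivial.mp (by omega)
    obtain ⟨t, hzt⟩ := hconn.preconnected.exists_adj_of_nontrivial z
    obtain ⟨hdc, hdb', hbc⟩ := habc
    rcases hG ⟨hdc, hdb', hbc⟩ hzt with h | h | h | rfl | rfl | rfl
    · exact hz.1 h
    · exact hz.2.1 h
    · exact hz.2.2 h
    · exact hG.not_adj_of_isCherry hconn h5 ⟨hz.2.1, hzt, hdb'⟩ (Ne.symm hz.2.2) hdc.symm hbc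
    · exact hG.not_adj_of_isCherry hconn h5 ⟨hz.2.2, hzt, hbc⟩ (Ne.symm hz.1) hdb'.ne hcd
    · exact hG.not_adj_of_isCherry hconn h5 ⟨hz.1, hzt, hcd⟩ (Ne.symm hz.2.1) hbc.ne hdb'
  · exact hG.not_adj_of_isCherry hconn h5 habc hda hdb hcd

theorem EdgesMeetCherries.exists_eq_starGraph (hG : G.EdgesMeetCherries) (hconn : G.Connected)
    (h5 : 5 ≤ Fintype.card V) : ∃ v, G = starGraph v := by
  obtain ⟨u, v, w, hc⟩ := hconn.exists_isCherry (by omega)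
  have hend : ∀ x y, G.Adj x y → x = u ∨ x = w → y = v := by
    rintro x y hxy (rfl | rfl)
    exacts [hG.eq_of_adj_of_isCherry hconn h5 hc.symm hxy,
      hG.eq_of_adj_of_isCherry hconn h5 hc hxy]
  have hcenter : ∀ x y, G.Adj x y → x = v ∨ y = v := by
    intro x y hxy
    have := hend x y hxy
    have := hend y x hxy.symm
    have := hG hc hxy
    tauto
  have : Nontrivial V := Fintype.one_lt_card_iff_nontrivial.mp (by omega)
  have hadj : ∀ x, x ≠ v → G.Adj x v := by
    intro x hx
    obtain ⟨t, hxt⟩ := hconn.preconnected.exists_adj_of_nontrivial x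
    obtain rfl | rfl := hcenter x t hxt
    exacts [(hx rfl).elim, hxt]
  refine ⟨v, SimpleGraph.ext (funext₂ fun x y => propext ?_)⟩
  rw [starGraph_adj]
  constructor
  · exact fun h => ⟨h.ne, hcenter x y h⟩
  · rintro ⟨hxy, rfl | rfl⟩
    exacts [(hadj y hxy.symm).symm, hadj x hxy]

end FiveVertices

end SimpleGraph

theorem starGraph_eq_starGraph_zero {n : ℕ} (hn : 0 < n) :
    starGraph n = SimpleGraph.starGraph ⟨0, hn⟩ := by
  ext a b
  simp [starGraph, Fin.ext_iff]

-- Computable adjacency, so that `decide` can evaluate these graphs; under `open scoped Classical`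
-- the instance found otherwise is `Classical.propDecidable`.
instance (n : ℕ) : DecidableRel (starGraph n).Adj := fun a b =>
  inferInstanceAs (Decidable (a ≠ b ∧ (a.val = 0 ∨ b.val = 0)))

instance : DecidableRel diamondGraph.Adj := fun a b =>
  decidable_of_iff (a ≠ b ∧ s(a, b) ≠ s(0, 1)) (by simp [diamondGraph])

instance : DecidableRel U13.Adj := fun a b =>
  decidable_of_iff (s(a, b) ∈ ({s(0, 1), s(0, 2), s(0, 3), s(1, 2)} : Finset _) ∧ a ≠ b)
    (by simp [U13])

namespace SimpleGraph

instance (n : ℕ) : DecidableRel (pathGraph n).Adj := fun _ _ => decidable_of_iff' _ pathGraph_adj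

variable {V W : Type*} {G : SimpleGraph V}

def Iso.starGraph (e : V ≃ W) (r : V) : starGraph r ≃g starGraph (e r) :=
  ⟨e, by simp [e.injective.eq_iff]⟩

theorem Iso.eq_starGraph {r : W} (φ : G ≃g SimpleGraph.starGraph r) :
    G = SimpleGraph.starGraph (φ.symm r) := by
  ext x y
  rw [← φ.map_adj_iff, starGraph_adj, starGraph_adj, φ.injective.ne_iff, φ.eq_symm_apply,
    φ.eq_symm_apply]

theorem Iso.nonempty_iso_iff {V' : Type*} {G' : SimpleGraph V'} {H : SimpleGraph W}
    (ψ : G ≃g G') : Nonempty (G ≃g H) ↔ Nonempty (G' ≃g H) :=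
  ⟨fun ⟨φ⟩ => ⟨ψ.symm.trans φ⟩, fun ⟨φ⟩ => ⟨ψ.trans φ⟩⟩

theorem nonempty_iso_iff_exists_equiv {H : SimpleGraph W} :
    Nonempty (G ≃g H) ↔ ∃ e : V ≃ W, ∀ a b, H.Adj (e a) (e b) ↔ G.Adj a b :=
  ⟨fun ⟨φ⟩ => ⟨φ.toEquiv, fun _ _ => φ.map_adj_iff⟩, fun ⟨e, he⟩ => ⟨⟨e, he _ _⟩⟩⟩

theorem nonempty_iso_starGraph [Fintype V] {n : ℕ} (hc : Fintype.card V = n) (v : V) :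
    Nonempty (starGraph v ≃g _root_.starGraph n) := by
  have hn : 0 < n := hc ▸ Fintype.card_pos_iff.mpr ⟨v⟩
  let e := Fintype.equivFinOfCardEq hc
  rw [starGraph_eq_starGraph_zero hn]
  have hv : (e.trans (Equiv.swap (e v) ⟨0, hn⟩)) v = ⟨0, hn⟩ := by simp
  exact hv ▸ ⟨Iso.starGraph _ v⟩

theorem edgesMeetCherries_of_iso_starGraph [Fintype V] {n : ℕ} (φ : G ≃g _root_.starGraph n) :
    G.EdgesMeetCherries := by
  rcases Nat.eq_zero_or_pos n with rfl | hn
  · exact edgesMeetCherries_of_card_le_four (φ.card_eq.trans_le (by simp))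
  · rw [starGraph_eq_starGraph_zero hn] at φ
    rw [φ.eq_starGraph]
    exact edgesMeetCherries_starGraph _

theorem Connected.nonempty_iso_of_card_eq_three [Fintype V] (hG : G.Connected)
    (h3 : Fintype.card V = 3) :
    Nonempty (G ≃g cycleGraph 3) ∨ Nonempty (G ≃g _root_.starGraph 3) := by
  obtain ⟨u, v, w, huw, huv, hvw⟩ := hG.exists_isCherry h3.ge
  have hmem : ∀ x, x = u ∨ x = v ∨ x = w := by
    have := Finset.eq_univ_of_card {u, v, w}
      (h3 ▸ Finset.card_eq_three.mpr ⟨u, v, w, huv.ne, huw, hvw.ne, rfl⟩)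
    simpa [Finset.ext_iff] using this
  have := huv.ne
  have := hvw.ne
  by_cases hu : G.Adj u w
  · left
    have : G = ⊤ := by
      ext x y
      rcases hmem x with rfl | rfl | rfl <;> rcases hmem y with rfl | rfl | rfl <;>
        simp_all [adj_comm, eq_comm]
    rw [this, cycleGraph_three_eq_top]
    exact ⟨Iso.completeGraph (Fintype.equivFinOfCardEq h3)⟩
  · right
    have : G = starGraph v := by
      ext x y
      rcases hmem x with rfl | rfl | rfl <;> rcases hmem y with rfl | rfl | rfl <;>
        simp_all [adj_comm, eq_comm]
    rw [this]
    exact nonempty_iso_starGraph h3 v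

/-- The graph on `Fin 4` in which `i < j` are adjacent iff `bᵢⱼ` is set: `decide` can run
through all graphs on `Fin 4` as these 64. -/
abbrev ofPairBits (b₀₁ b₀₂ b₀₃ b₁₂ b₁₃ b₂₃ : Bool) : SimpleGraph (Fin 4) :=
  fromRel fun i j => ![![false, b₀₁, b₀₂, b₀₃], ![false, false, b₁₂, b₁₃],
    ![false, false, false, b₂₃], ![false, false, false, false]] i j

theorem exists_eq_ofPairBits (H : SimpleGraph (Fin 4)) :
    ∃ b₀₁ b₀₂ b₀₃ b₁₂ b₁₃ b₂₃, H = ofPairBits b₀₁ b₀₂ b₀₃ b₁₂ b₁₃ b₂₃ := by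
  refine ⟨H.Adj 0 1, H.Adj 0 2, H.Adj 0 3, H.Adj 1 2, H.Adj 1 3, H.Adj 2 3, ?_⟩
  ext i j
  fin_cases i <;> fin_cases j <;> simp <;> exact H.adj_comm _ _

theorem Connected.nonempty_iso_of_fin_four {H : SimpleGraph (Fin 4)} (hH : H.Connected) :
    Nonempty (H ≃g cycleGraph 4) ∨ Nonempty (H ≃g diamondGraph) ∨
      Nonempty (H ≃g (⊤ : SimpleGraph (Fin 4))) ∨ Nonempty (H ≃g U13) ∨
      Nonempty (H ≃g pathGraph 4) ∨ Nonempty (H ≃g _root_.starGraph 4) := by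
  obtain ⟨b₀₁, b₀₂, b₀₃, b₁₂, b₁₃, b₂₃, rfl⟩ := exists_eq_ofPairBits H
  simp only [nonempty_iso_iff_exists_equiv]
  revert b₀₁ b₀₂ b₀₃ b₁₂ b₁₃ b₂₃
  decide +kernel

theorem Connected.nonempty_iso_of_card_eq_four [Fintype V] (hG : G.Connected)
    (h4 : Fintype.card V = 4) :
    Nonempty (G ≃g cycleGraph 4) ∨ Nonempty (G ≃g diamondGraph) ∨
      Nonempty (G ≃g (⊤ : SimpleGraph (Fin 4))) ∨ Nonempty (G ≃g U13) ∨
      Nonempty (G ≃g pathGraph 4) ∨ Nonempty (G ≃g _root_.starGraph 4) := by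
  let ψ := Iso.map (Fintype.equivFinOfCardEq h4) G
  simp only [ψ.nonempty_iso_iff]
  exact (ψ.connected_iff.mp hG).nonempty_iso_of_fin_four

end SimpleGraph

theorem connected_edgeAlpha1_eq_two_iff {V : Type*} [Fintype V] (G : SimpleGraph V)
    (hconn : G.Connected) {n : ℕ} (hc : Fintype.card V = n) (hn : 3 ≤ n) :
    edgeAlpha1 G = 2 ↔
      Nonempty (G ≃g SimpleGraph.cycleGraph 3) ∨
      Nonempty (G ≃g SimpleGraph.cycleGraph 4) ∨
      Nonempty (G ≃g diamondGraph) ∨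
      Nonempty (G ≃g (⊤ : SimpleGraph (Fin 4))) ∨
      Nonempty (G ≃g U13) ∨
      Nonempty (G ≃g SimpleGraph.pathGraph 4) ∨
      Nonempty (G ≃g starGraph n) := by
  subst hc
  rw [edgeAlpha1_eq_two_iff, and_iff_right (hconn.exists_isCherry hn)]
  constructor
  · intro hG
    obtain h3 | h4 | h5 : Fintype.card V = 3 ∨ Fintype.card V = 4 ∨ 5 ≤ Fintype.card V := by
      omega
    · have := hconn.nonempty_iso_of_card_eq_three h3
      rw [h3]
      tauto
    · have := hconn.nonempty_iso_of_card_eq_four h4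
      rw [h4]
      tauto
    · obtain ⟨v, rfl⟩ := hG.exists_eq_starGraph hconn h5
      have := SimpleGraph.nonempty_iso_starGraph rfl v
      tauto
  · rintro (h | h | h | h | h | h | h) <;> obtain ⟨φ⟩ := h
    all_goals first
      | exact SimpleGraph.edgesMeetCherries_of_iso_starGraph φ
      | exact SimpleGraph.edgesMeetCherries_of_card_le_four (φ.card_eq.trans_le (by simp))
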